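/- Let A and B be d×d Hermitian positive definite matrices. Then for any t ∈ [0,1], det(tA + (1-t)B) ≥ (t·det(A)^{1/d} + (1-t)·det(B)^{1/d})^d. -/

import Mathlib

/-!
Write `B = D⋆D` and `C = D⁻⋆ A D⁻¹ ⪰ 0` with eigenvalues `μᵢ ≥ 0`. Then `det A = det B · ∏ μᵢ` and
`det (A + B) = det B · ∏ (μᵢ + 1)`, so Minkowski's inequality
`(det A)^(1/n) + (det B)^(1/n) ≤ (det (A + B))^(1/n)` reduces to the superadditivity of the
geometric mean, `∏ μᵢ^(1/n) + 1 ≤ ∏ (μᵢ + 1)^(1/n)`; dividing by the right-hand side, this is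
AM–GM applied to the numbers `μᵢ/(μᵢ + 1)` and to the numbers `1/(μᵢ + 1)`. The theorem is
Minkowski's inequality for `tA` and `(1 - t)B`, using `det (cA)^(1/n) = c (det A)^(1/n)`.
-/

open Matrix
open scoped ComplexOrder

open Finset in
theorem Real.geom_mean_add_geom_mean_le_weighted {ι : Type*} (s : Finset ι) (w a b : ι → ℝ)
    (hw : ∀ i ∈ s, 0 ≤ w i) (hw' : ∑ i ∈ s, w i = 1) (ha : ∀ i ∈ s, 0 ≤ a i)
    (hb : ∀ i ∈ s, 0 ≤ b i) (hab : ∀ i ∈ s, 0 < a i + b i) :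
    ∏ i ∈ s, a i ^ w i + ∏ i ∈ s, b i ^ w i ≤ ∏ i ∈ s, (a i + b i) ^ w i := by
  have hP : 0 < ∏ i ∈ s, (a i + b i) ^ w i := prod_pos fun i hi => rpow_pos_of_pos (hab i hi) _
  have ratio (c : ι → ℝ) (hc : ∀ i ∈ s, 0 ≤ c i) :
      (∏ i ∈ s, c i ^ w i) / ∏ i ∈ s, (a i + b i) ^ w i ≤ ∑ i ∈ s, w i * (c i / (a i + b i)) := by
    rw [← prod_div_distrib]
    calc _ = ∏ i ∈ s, (c i / (a i + b i)) ^ w i :=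
          prod_congr rfl fun i hi => (div_rpow (hc i hi) (hab i hi).le _).symm
      _ ≤ _ := geom_mean_le_arith_mean_weighted s w _ hw hw' fun i hi =>
          div_nonneg (hc i hi) (hab i hi).le
  have hsum : ∑ i ∈ s, w i * (a i / (a i + b i)) + ∑ i ∈ s, w i * (b i / (a i + b i)) = 1 := by
    rw [← sum_add_distrib, ← hw']
    refine sum_congr rfl fun i hi => ?_
    rw [← mul_add, ← add_div, div_self (hab i hi).ne', mul_one]
  rw [← div_le_one hP, add_div]
  linarith [ratio a ha, ratio b hb]

namespace Matrix
variable {𝕜 n : Type*} [RCLike 𝕜] [Fintype n] [DecidableEq n]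

theorem IsHermitian.det_add_one {C : Matrix n n 𝕜} (hC : C.IsHermitian) :
    (C + 1).det = ∏ i, ((hC.eigenvalues i + 1 : ℝ) : 𝕜) := by
  set U := hC.eigenvectorUnitary
  have h1 : (1 : Matrix n n 𝕜) = Unitary.conjStarAlgAut 𝕜 _ U 1 := (map_one _).symm
  conv_lhs => rw [hC.spectral_theorem, h1, ← map_add, Unitary.conjStarAlgAut_apply, det_mul_comm,
    ← mul_assoc, Unitary.coe_star_mul_self, one_mul, ← diagonal_one, diagonal_add, det_diagonal]
  simp

theorem det_star_mul_mul_self (D X : Matrix n n 𝕜) :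
    (star D * X * D).det = (star D * D).det * X.det := by
  simp only [det_mul]
  ring

open scoped MatrixOrder in
theorem PosSemidef.exists_det_eq_and_det_add_eq {A B : Matrix n n 𝕜} (hA : A.PosSemidef)
    (hB : B.PosDef) : ∃ μ : n → ℝ, (∀ i, 0 ≤ μ i) ∧ A.det = B.det * ∏ i, (μ i : 𝕜) ∧
      (A + B).det = B.det * ∏ i, ((μ i + 1 : ℝ) : 𝕜) := by
  obtain ⟨D, rfl⟩ := CStarAlgebra.nonneg_iff_eq_star_mul_self.mp hB.posSemidef.nonneg
  have hD : IsUnit D.det := by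
    have := (isUnit_iff_isUnit_det _).mp hB.isUnit
    rw [det_mul] at this
    exact isUnit_of_mul_isUnit_right this
  set C := star D⁻¹ * A * D⁻¹
  have hC : C.PosSemidef := hA.conjTranspose_mul_mul_same D⁻¹
  have hAC : A = star D * C * D := by
    have : star D * star D⁻¹ = 1 := by rw [← star_mul, nonsing_inv_mul _ hD, star_one]
    simp only [C, ← mul_assoc, this, one_mul]
    rw [mul_assoc, nonsing_inv_mul _ hD, mul_one]
  refine ⟨hC.1.eigenvalues, hC.eigenvalues_nonneg, ?_, ?_⟩
  · rw [hAC, det_star_mul_mul_self, hC.1.det_eq_prod_eigenvalues]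
  · have : A + star D * D = star D * (C + 1) * D := by rw [hAC]; noncomm_ring
    rw [this, det_star_mul_mul_self, hC.1.det_add_one]

theorem PosSemidef.re_det_nonneg {A : Matrix n n 𝕜} (hA : A.PosSemidef) : 0 ≤ RCLike.re A.det :=
  (RCLike.nonneg_iff.mp hA.det_nonneg).1

theorem PosSemidef.re_det_rpow_add_le_of_posDef [Nonempty n] {A B : Matrix n n 𝕜}
    (hA : A.PosSemidef) (hB : B.PosDef) :
    RCLike.re A.det ^ (1 / Fintype.card n : ℝ) + RCLike.re B.det ^ (1 / Fintype.card n : ℝ) ≤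
      RCLike.re (A + B).det ^ (1 / Fintype.card n : ℝ) := by
  set p : ℝ := 1 / Fintype.card n
  obtain ⟨μ, hμ, hdetA, hdetAB⟩ := hA.exists_det_eq_and_det_add_eq hB
  have hb := hB.posSemidef.re_det_nonneg
  have key := Real.geom_mean_add_geom_mean_le_weighted Finset.univ (fun _ => p) μ 1
    (fun _ _ => by positivity) (by simp [p]) (fun i _ => hμ i) (fun _ _ => zero_le_one)
    (fun i _ => by simp only [Pi.one_apply]; linarith [hμ i])
  simp only [Pi.one_apply, Real.one_rpow, Finset.prod_const_one] at key
  rw [hdetA, hdetAB, ← RCLike.ofReal_prod, ← RCLike.ofReal_prod, RCLike.re_mul_ofReal,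
    RCLike.re_mul_ofReal, Real.mul_rpow hb (Finset.prod_nonneg fun i _ => hμ i),
    Real.mul_rpow hb (Finset.prod_nonneg fun i _ => by linarith [hμ i]),
    ← Real.finsetProd_rpow _ _ fun i _ => hμ i,
    ← Real.finsetProd_rpow _ _ fun i _ => by linarith [hμ i]]
  nlinarith [Real.rpow_nonneg hb p]

theorem PosSemidef.re_det_rpow_add_le [Nonempty n] {A B : Matrix n n 𝕜}
    (hA : A.PosSemidef) (hB : B.PosSemidef) :
    RCLike.re A.det ^ (1 / Fintype.card n : ℝ) + RCLike.re B.det ^ (1 / Fintype.card n : ℝ) ≤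
      RCLike.re (A + B).det ^ (1 / Fintype.card n : ℝ) := by
  by_cases hB' : B.PosDef
  · exact hA.re_det_rpow_add_le_of_posDef hB'
  by_cases hA' : A.PosDef
  · rw [add_comm, add_comm A]
    exact hB.re_det_rpow_add_le_of_posDef hA'
  rw [hA.posDef_iff_det_ne_zero, not_not] at hA'
  rw [hB.posDef_iff_det_ne_zero, not_not] at hB'
  have hp : (1 / Fintype.card n : ℝ) ≠ 0 := by simp
  rw [hA', hB', map_zero, Real.zero_rpow hp, zero_add]
  exact Real.rpow_nonneg (hA.add hB).re_det_nonneg _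

theorem PosSemidef.re_det_ofReal_smul_rpow [Nonempty n] {A : Matrix n n 𝕜} (hA : A.PosSemidef)
    {c : ℝ} (hc : 0 ≤ c) :
    RCLike.re ((c : 𝕜) • A).det ^ (1 / Fintype.card n : ℝ) =
      c * RCLike.re A.det ^ (1 / Fintype.card n : ℝ) := by
  rw [det_smul, ← RCLike.ofReal_pow, RCLike.re_ofReal_mul, Real.mul_rpow (by positivity)
    hA.re_det_nonneg, one_div, Real.pow_rpow_inv_natCast hc Fintype.card_ne_zero]

end Matrix

theorem stmt_1 {d : ℕ} (A B : Matrix (Fin d) (Fin d) ℂ)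
    (hA : A.PosDef) (hB : B.PosDef) (t : ℝ) (ht : t ∈ Set.Icc (0 : ℝ) 1) :
    (t * (A.det.re) ^ ((1 : ℝ) / d) + (1 - t) * (B.det.re) ^ ((1 : ℝ) / d)) ^ (d : ℕ) ≤
      ((t : ℂ) • A + ((1 : ℂ) - t) • B).det.re := by
  obtain ⟨ht0, ht1⟩ := ht
  rcases Nat.eq_zero_or_pos d with rfl | hd
  · simp
  have : Nonempty (Fin d) := ⟨⟨0, hd⟩⟩
  have h1t : (1 : ℂ) - t = ((1 - t : ℝ) : ℂ) := by push_cast; rfl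
  rw [h1t]
  have ht1' : 0 ≤ 1 - t := sub_nonneg.mpr ht1
  have hA' : ((t : ℂ) • A).PosSemidef := hA.posSemidef.smul (Complex.zero_le_real.mpr ht0)
  have hB' : (((1 - t : ℝ) : ℂ) • B).PosSemidef := hB.posSemidef.smul (Complex.zero_le_real.mpr ht1')
  have hsum := hA'.re_det_rpow_add_le hB'
  have eA := hA.posSemidef.re_det_ofReal_smul_rpow (𝕜 := ℂ) ht0
  have eB := hB.posSemidef.re_det_ofReal_smul_rpow (𝕜 := ℂ) ht1'
  simp only [RCLike.ofReal_eq_complex_ofReal] at eA eB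
  rw [eA, eB] at hsum
  simp only [RCLike.re_to_complex, Fintype.card_fin] at hsum
  refine (pow_le_pow_left₀ ?_ hsum d).trans_eq ?_
  · exact add_nonneg (mul_nonneg ht0 (Real.rpow_nonneg hA.posSemidef.re_det_nonneg _))
      (mul_nonneg ht1' (Real.rpow_nonneg hB.posSemidef.re_det_nonneg _))
  · rw [one_div]
    exact Real.rpow_inv_natCast_pow (hA'.add hB').re_det_nonneg hd.ne'
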